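/- arXiv:2307.14264 — 3 statements merged into one kernel-verified Lean document; each statement's English description precedes it below -/
import Mathlib

section
/- Let p be a pattern, S ∈ p, and u ∈ S. Let p' be obtained from p by replacing S with S \ {u}. Then p dominates p': every pattern q consistent with p' is also consistent with p. -/
/-!
Write `p'` for `p` with `S` shrunk to `E ⊆ S`, and send `E` back to `S` (`restore`). Since `S`
meets whatever `E` meets, every link of `p'` with `q` becomes a path of links of `p` with `q`.
Consistency of `p'` and `q` means that every member of `p' ∪ q` is connected to the member `Z` of
`q` containing `z`, and transporting these paths connects every member of `p ∪ q` to `Z`, which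
is consistency of `p` and `q`.
-/

open Finset
open scoped Classical

namespace PatternST

variable {α : Type*} [DecidableEq α]

/-- `p` is a pattern over ground set `U` with zero element `z`:
a family of subsets of `U ∪ {z}` with exactly one member containing `z`. -/
def IsPattern (z : α) (U : Finset α) (p : Finset (Finset α)) : Prop :=
  (∀ S ∈ p, S ⊆ insert z U) ∧ ∃! S, S ∈ p ∧ z ∈ S

/-- Two sets are linked if one belongs to `p`, the other to `q`, and they intersect. -/
def linkRel (p q : Finset (Finset α)) (S T : Finset α) : Prop :=
  ((S ∈ p ∧ T ∈ q) ∨ (S ∈ q ∧ T ∈ p)) ∧ (S ∩ T).Nonempty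

/-- Reflexive-transitive (and, by symmetry of `linkRel`, symmetric) closure. -/
def conn (p q : Finset (Finset α)) : Finset α → Finset α → Prop :=
  Relation.ReflTransGen (linkRel p q)

/-- The join `p ⋈ q`: unions of the equivalence classes of `conn` on `p ∪ q`. -/
noncomputable def pjoin (p q : Finset (Finset α)) : Finset (Finset α) :=
  (p ∪ q).image fun S => ((p ∪ q).filter fun T => conn p q S T).sup id

/-- `p` and `q` are consistent if `p ⋈ q` consists of a single set. -/
def consistent (p q : Finset (Finset α)) : Prop := (pjoin p q).card = 1

/-- The labels (elements of `U`, i.e. everything except `z`) occurring in `p`. -/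
def lbs (z : α) (p : Finset (Finset α)) : Finset α := (p.sup id).erase z

/-- The labels appearing as singletons in `p`. -/
def sing (z : α) (p : Finset (Finset α)) : Finset α :=
  (lbs z p).filter fun u => ({u} : Finset α) ∈ p

/-- A pattern is complete if every occurring label occurs as a singleton. -/
def Complete (z : α) (p : Finset (Finset α)) : Prop := lbs z p = sing z p

section Connectivity

variable {p q : Finset (Finset α)} {A B : Finset α}

lemma linkRel_symm (h : linkRel p q A B) : linkRel p q B A :=
  ⟨h.1.symm.imp And.symm And.symm, Finset.inter_comm A B ▸ h.2⟩

lemma linkRel_of_mem_left (hA : A ∈ p) (hB : B ∈ q) (hAB : (A ∩ B).Nonempty) :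
    linkRel p q A B :=
  ⟨Or.inl ⟨hA, hB⟩, hAB⟩

lemma conn_symm (h : conn p q A B) : conn p q B A :=
  Relation.ReflTransGen.mono (fun _ _ => linkRel_symm) B A (Relation.ReflTransGen.swap B A h)

end Connectivity

section Consistency

variable {p q : Finset (Finset α)}

/-- The member of `p ⋈ q` containing `A`. -/
noncomputable def block (p q : Finset (Finset α)) (A : Finset α) : Finset α :=
  ((p ∪ q).filter fun T => conn p q A T).sup id

lemma mem_block {A : Finset α} {x : α} :
    x ∈ block p q A ↔ ∃ T ∈ p ∪ q, conn p q A T ∧ x ∈ T := by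
  simp only [block, Finset.mem_sup, Finset.mem_filter, id, and_assoc]

lemma block_eq_of_consistent (h : consistent p q) {A B : Finset α} (hA : A ∈ p ∪ q)
    (hB : B ∈ p ∪ q) : block p q A = block p q B := by
  obtain ⟨c, hc⟩ := Finset.card_eq_one.mp h
  have hmem : ∀ X ∈ p ∪ q, block p q X = c := fun X hX =>
    Finset.mem_singleton.mp (hc ▸ Finset.mem_image_of_mem (block p q) hX)
  rw [hmem A hA, hmem B hB]

/-- The join is a single set, which contains `z`; a member containing `z` is either `Z` or,
lying in `p`, linked to `Z`. -/
lemma conn_of_consistent (h : consistent p q) {z : α} {Z : Finset α} (hZ : Z ∈ q) (hzZ : z ∈ Z)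
    (hZuniq : ∀ T ∈ q, z ∈ T → T = Z) {A : Finset α} (hA : A ∈ p ∪ q) : conn p q A Z := by
  have hZpq : Z ∈ p ∪ q := Finset.mem_union_right p hZ
  have hz : z ∈ block p q A := by
    rw [block_eq_of_consistent h hA hZpq]
    exact mem_block.mpr ⟨Z, hZpq, Relation.ReflTransGen.refl, hzZ⟩
  obtain ⟨T, hT, hAT, hzT⟩ := mem_block.mp hz
  rcases Finset.mem_union.mp hT with hTp | hTq
  · exact hAT.tail (linkRel_of_mem_left hTp hZ ⟨z, Finset.mem_inter.mpr ⟨hzT, hzZ⟩⟩)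
  · rwa [hZuniq T hTq hzT] at hAT

lemma consistent_of_conn {Z : Finset α} (hZ : Z ∈ p ∪ q)
    (hconn : ∀ A ∈ p ∪ q, conn p q A Z) : consistent p q := by
  have hblock : ∀ A ∈ p ∪ q, block p q A = (p ∪ q).sup id := fun A hA => by
    have hall : ∀ T ∈ p ∪ q, conn p q A T := fun T hT =>
      (hconn A hA).trans (conn_symm (hconn T hT))
    rw [block, Finset.filter_true_of_mem hall]
  rw [consistent, Finset.card_eq_one]
  refine ⟨(p ∪ q).sup id, ?_⟩
  change (p ∪ q).image (block p q) = _
  rw [Finset.image_congr hblock, Finset.image_const ⟨Z, hZ⟩]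

end Consistency

section Shrinking

variable {p q : Finset (Finset α)} {S E A B : Finset α}

def restore (E S A : Finset α) : Finset α := if A = E then S else A

lemma restore_mem (hS : S ∈ p) (hA : A ∈ insert E (p.erase S)) : restore E S A ∈ p := by
  unfold restore
  split_ifs with hAE
  · exact hS
  · exact Finset.mem_of_mem_erase ((Finset.mem_insert.mp hA).resolve_left hAE)

lemma subset_restore (hES : E ⊆ S) : A ⊆ restore E S A := by
  unfold restore
  split_ifs with hAE
  · exact hAE ▸ hES
  · exact subset_rfl

lemma conn_restore_of_mem_right (hS : S ∈ p) (hES : E ⊆ S) (hB : B ∈ q) (hne : B.Nonempty) :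
    conn p q B (restore E S B) := by
  unfold restore
  split_ifs with hBE
  · refine Relation.ReflTransGen.single ⟨Or.inr ⟨hB, hS⟩, ?_⟩
    rwa [Finset.inter_eq_left.mpr (hBE ▸ hES)]
  · exact Relation.ReflTransGen.refl

lemma linkRel_restore_left (hS : S ∈ p) (hES : E ⊆ S) (hA : A ∈ insert E (p.erase S))
    (hB : B ∈ q) (hAB : (A ∩ B).Nonempty) : linkRel p q (restore E S A) B :=
  linkRel_of_mem_left (restore_mem hS hA) hB
    (hAB.mono (Finset.inter_subset_inter_right (subset_restore hES)))

lemma conn_restore_of_linkRel_left (hS : S ∈ p) (hES : E ⊆ S)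
    (hA : A ∈ insert E (p.erase S)) (hB : B ∈ q) (hAB : (A ∩ B).Nonempty) :
    conn p q (restore E S A) (restore E S B) :=
  (Relation.ReflTransGen.single (linkRel_restore_left hS hES hA hB hAB)).trans
    (conn_restore_of_mem_right hS hES hB (hAB.mono Finset.inter_subset_right))

lemma conn_restore_of_conn (hS : S ∈ p) (hES : E ⊆ S)
    (h : conn (insert E (p.erase S)) q A B) : conn p q (restore E S A) (restore E S B) := by
  refine Relation.ReflTransGen.lift' (restore E S) (fun X Y hXY => ?_) A B h
  rcases hXY with ⟨⟨hX, hY⟩ | ⟨hX, hY⟩, hne⟩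
  · exact conn_restore_of_linkRel_left hS hES hX hY hne
  · rw [Finset.inter_comm] at hne
    exact conn_symm (conn_restore_of_linkRel_left hS hES hY hX hne)

/-- For `A ∈ p \ q`, the partner in `q` of the link also meets `restore E S A ⊇ A`. -/
lemma conn_restore_of_linkRel (hS : S ∈ p) (hES : E ⊆ S) (hA : A ∈ p ∪ q)
    (h : linkRel (insert E (p.erase S)) q A B) : conn p q A (restore E S A) := by
  by_cases hAq : A ∈ q
  · exact conn_restore_of_mem_right hS hES hAq (h.2.mono Finset.inter_subset_left)
  have hAp : A ∈ p := (Finset.mem_union.mp hA).resolve_right hAq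
  obtain ⟨⟨hA', hB⟩ | ⟨hAq', _⟩, hne⟩ := h
  · exact (Relation.ReflTransGen.single (linkRel_of_mem_left hAp hB hne)).tail
      (linkRel_symm (linkRel_restore_left hS hES hA' hB hne))
  · exact absurd hAq' hAq

theorem consistent_of_consistent_shrink {z : α} {Z : Finset α} (hS : S ∈ p) (hES : E ⊆ S)
    (hZ : Z ∈ q) (hzZ : z ∈ Z) (hZuniq : ∀ T ∈ q, z ∈ T → T = Z)
    (h : consistent (insert E (p.erase S)) q) : consistent p q := by
  have hreach : ∀ A ∈ insert E (p.erase S) ∪ q, conn (insert E (p.erase S)) q A Z :=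
    fun A hA => conn_of_consistent h hZ hzZ hZuniq hA
  have hrestoreZ : conn p q (restore E S Z) Z :=
    conn_symm (conn_restore_of_mem_right hS hES hZ ⟨z, hzZ⟩)
  have hrestore : ∀ A ∈ insert E (p.erase S) ∪ q, conn p q (restore E S A) Z :=
    fun A hA => (conn_restore_of_conn hS hES (hreach A hA)).trans hrestoreZ
  refine consistent_of_conn (Finset.mem_union_right p hZ) fun A hA => ?_
  by_cases hAS : A = S
  · have hE := hrestore E (Finset.mem_union_left q (Finset.mem_insert_self E _))
    rwa [restore, if_pos rfl, ← hAS] at hE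
  have hA' : A ∈ insert E (p.erase S) ∪ q := by
    rcases Finset.mem_union.mp hA with hAp | hAq
    · exact Finset.mem_union_left q (Finset.mem_insert_of_mem (Finset.mem_erase.mpr ⟨hAS, hAp⟩))
    · exact Finset.mem_union_right _ hAq
  rcases Relation.ReflTransGen.cases_head (hreach A hA') with rfl | ⟨B, hAB, _⟩
  · exact Relation.ReflTransGen.refl
  · exact (conn_restore_of_linkRel hS hES hA hAB).trans (hrestore A hA')

end Shrinking

theorem removing_element_dominated_general (z : α) (U : Finset α) (p : Finset (Finset α))
    (S : Finset α) (hS : S ∈ p) (u : α) :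
    ∀ q : Finset (Finset α), IsPattern z U q →
      consistent (insert (S.erase u) (p.erase S)) q → consistent p q := by
  rintro q ⟨-, Z, ⟨hZ, hzZ⟩, hZuniq⟩ h
  exact consistent_of_consistent_shrink hS (Finset.erase_subset u S) hZ hzZ
    (fun T hT hzT => hZuniq T ⟨hT, hzT⟩) h

/-- Removing an element from a set of `p` yields a pattern dominated by `p`. -/
theorem removing_element_dominated (z : α) (U : Finset α) (p : Finset (Finset α))
    (hp : IsPattern z U p) (S : Finset α) (hS : S ∈ p) (u : α) (hu : u ∈ S) :
    ∀ q : Finset (Finset α), IsPattern z U q →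
      consistent (insert (S.erase u) (p.erase S)) q → consistent p q :=
  removing_element_dominated_general z U p S hS u

end PatternST
end

section
/- If p and q are complete patterns (every label occurring in the pattern also occurs as a singleton) and p ∼ q, then lbs(p) = lbs(q). -/
open Finset
open scoped Classical

namespace PatternST

variable {α : Type*} [DecidableEq α]

lemma linkRel_comm (p q : Finset (Finset α)) : linkRel p q = linkRel q p := by
  ext S T
  simp only [linkRel]
  tauto

lemma pjoin_comm (p q : Finset (Finset α)) : pjoin p q = pjoin q p := by
  unfold pjoin conn
  rw [linkRel_comm, Finset.union_comm]

lemma lbs_subset_aux (z : α) (p q : Finset (Finset α))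
    (hp : IsPattern z U p) (hcp : Complete z p) (h : consistent p q) :
    lbs z p ⊆ lbs z q := by
  intro u hu
  by_contra hnq
  have huz : u ≠ z := (Finset.mem_erase.mp hu).1
  have hup : ({u} : Finset α) ∈ p := by
    have := hcp ▸ hu
    exact (Finset.mem_filter.mp this).2
  have hunotq : ∀ T ∈ q, u ∉ T := by
    intro T hT hmem
    exact hnq (Finset.mem_erase.mpr ⟨huz, Finset.le_sup (f := id) hT hmem⟩)
  have hconn : ∀ T, conn p q ({u} : Finset α) T → T = {u} := by
    intro T hT
    rcases Relation.ReflTransGen.cases_head hT with rfl | ⟨b, hstep, -⟩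
    · rfl
    · exfalso
      obtain ⟨hmem, ⟨x, hx⟩⟩ := hstep
      rw [Finset.mem_inter, Finset.mem_singleton] at hx
      obtain ⟨rfl, hxb⟩ := hx
      rcases hmem with ⟨-, hbq⟩ | ⟨huq, -⟩
      · exact hunotq b hbq hxb
      · exact hunotq _ huq (Finset.mem_singleton_self x)
  have hsingleton_mem : ({u} : Finset α) ∈ pjoin p q := by
    have hfilter : (p ∪ q).filter (fun T => conn p q {u} T) = {({u} : Finset α)} := by
      ext T
      simp only [Finset.mem_filter, Finset.mem_singleton]
      constructor
      · rintro ⟨-, hT⟩; exact hconn T hT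
      · rintro rfl; exact ⟨Finset.mem_union_left _ hup, Relation.ReflTransGen.refl⟩
    refine Finset.mem_image.mpr ⟨{u}, Finset.mem_union_left _ hup, ?_⟩
    rw [hfilter, Finset.sup_singleton]
    rfl
  obtain ⟨S₀, ⟨hS₀p, hzS₀⟩, -⟩ := hp.2
  have hWmem : ((p ∪ q).filter fun T => conn p q S₀ T).sup id ∈ pjoin p q :=
    Finset.mem_image_of_mem _ (Finset.mem_union_left _ hS₀p)
  have hzW : z ∈ ((p ∪ q).filter fun T => conn p q S₀ T).sup id :=
    (Finset.le_sup (f := id) (Finset.mem_filter.mpr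
      ⟨Finset.mem_union_left _ hS₀p, Relation.ReflTransGen.refl⟩)) hzS₀
  obtain ⟨a, ha⟩ := Finset.card_eq_one.mp h
  rw [ha, Finset.mem_singleton] at hWmem hsingleton_mem
  rw [hWmem, ← hsingleton_mem, Finset.mem_singleton] at hzW
  exact huz hzW.symm

/-- Consistent complete patterns have the same label set. -/
theorem complete_consistent_same_labels (z : α) (U : Finset α)
    (p q : Finset (Finset α)) (hp : IsPattern z U p) (hq : IsPattern z U q)
    (hcp : Complete z p) (hcq : Complete z q) (h : consistent p q) :
    lbs z p = lbs z q := by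
  have h' : consistent q p := by
    unfold consistent
    rw [pjoin_comm]
    exact h
  exact Finset.Subset.antisymm (lbs_subset_aux z p q hp hcp h)
    (lbs_subset_aux z q p hq hcq h')

end PatternST
end

section
/- Let X, Y, Z ⊆ U and let p be a complete pattern not containing labels of X ∪ Y ∪ Z in non-singleton sets; define p₀ = p ∪ {X ∪ Y, Z}, p₁ = p ∪ {Y ∪ Z, X}, p₂ = p ∪ {X ∪ Z, Y}. Then {p₁, p₂} jointly dominates p₀: for every pattern r with p₀ ∼ r, at least one of p₁ ∼ r or p₂ ∼ r holds. -/
/-! View `q ⋈ r` as the graph on `q ∪ r` joining intersecting sets from opposite sides;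
consistency is its connectedness. Paths of the `p₀`-graph, cut where they first use one of
the two new sets, give sets `T, T'` of `r` with `T` meeting `X ∪ Y` and `T'` meeting `Z`,
joined by a path of the `p`-graph. If `T` meets `X`, this path connects the new sets `X` and
`Y ∪ Z` of `p₁`; if `T` meets `Y`, it connects `Y` and `X ∪ Z` of `p₂`. Every other set is
joined in the `p`-graph to a set of `r` meeting `X ∪ Y ∪ Z`, hence to a new set of `p₁`
(resp. `p₂`). -/

open Finset
open scoped Classical

namespace PatternST

variable {α : Type*} [DecidableEq α]

def ExtendsWithin (p q : Finset (Finset α)) (M : Finset α) : Prop :=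
  ∀ S ∈ q, S ∈ p ∨ S ⊆ M

lemma ExtendsWithin.insert {p q : Finset (Finset α)} {A M : Finset α}
    (hq : ExtendsWithin p q M) (hA : A ⊆ M) : ExtendsWithin p (insert A q) M := fun S hS =>
  (mem_insert.mp hS).elim (fun h => Or.inr (h ▸ hA)) (hq S)

lemma extendsWithin_insert {p : Finset (Finset α)} {A M : Finset α} (hA : A ⊆ M) :
    ExtendsWithin p (insert A p) M :=
  ExtendsWithin.insert (fun _ => Or.inl) hA

section Connectivity

variable {p q r : Finset (Finset α)} {S T W R M : Finset α}

lemma linkRel_symm_s14 (h : linkRel q r S T) : linkRel q r T S :=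
  ⟨h.1.symm.imp And.symm And.symm, inter_comm S T ▸ h.2⟩

lemma conn_symm_s14 (h : conn q r S T) : conn q r T S := by
  induction h with
  | refl => exact .refl
  | tail _ hlink ih => exact ih.head (linkRel_symm_s14 hlink)

lemma conn_mono (hpq : p ⊆ q) (h : conn p r S T) : conn q r S T :=
  Relation.ReflTransGen.mono
    (fun _ _ hl => ⟨hl.1.imp (And.imp_left (hpq ·)) (And.imp_right (hpq ·)), hl.2⟩) S T h

lemma conn_of_mem_of_mem (hS : S ∈ q) (hT : T ∈ r) (h : (S ∩ T).Nonempty) : conn q r S T :=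
  .single ⟨Or.inl ⟨hS, hT⟩, h⟩

lemma mem_union_of_conn (h : conn p r S T) (hS : S ∈ p ∪ r) : T ∈ p ∪ r := by
  induction h with
  | refl => exact hS
  | tail _ hlink _ =>
    rcases hlink.1 with ⟨-, h⟩ | ⟨-, h⟩
    exacts [mem_union_right _ h, mem_union_left _ h]

/-- One of `S`, `N` lies on the side opposite to `P`. -/
lemma conn_of_linkRel_of_mem {N P : Finset α} {u : α} (hSN : linkRel q r S N) (huS : u ∈ S)
    (huN : u ∈ N) (hP : P ∈ q ∪ r) (huP : u ∈ P) : conn q r S P := by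
  have hSN' : conn q r S N := .single hSN
  rcases hSN.1 with ⟨hSq, hNr⟩ | ⟨hSr, hNq⟩ <;> rcases mem_union.mp hP with hPq | hPr
  · exact hSN'.tail ⟨Or.inr ⟨hNr, hPq⟩, u, mem_inter.mpr ⟨huN, huP⟩⟩
  · exact conn_of_mem_of_mem hSq hPr ⟨u, mem_inter.mpr ⟨huS, huP⟩⟩
  · exact .single ⟨Or.inr ⟨hSr, hPq⟩, u, mem_inter.mpr ⟨huS, huP⟩⟩
  · exact hSN'.tail ⟨Or.inl ⟨hNq, hPr⟩, u, mem_inter.mpr ⟨huN, huP⟩⟩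

lemma conn_of_consistent_s14 (h : consistent q r) :
    ∀ S ∈ q ∪ r, ∀ T ∈ q ∪ r, conn q r S T := by
  obtain ⟨J, hJ⟩ := card_eq_one.mp h
  have hcomp : ∀ S ∈ q ∪ r, ((q ∪ r).filter (conn q r S)).sup id = J := fun S hS =>
    mem_singleton.mp (hJ ▸ mem_image_of_mem _ hS)
  -- An element of a linked pair lies in `J`, hence in every component, which therefore
  -- reaches the pair; without links every component is a single set equal to `J`.
  by_cases hlink : ∃ S N, linkRel q r S N
  · obtain ⟨H, N, hHN⟩ := hlink
    obtain ⟨u, hu⟩ := hHN.2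
    have hH : H ∈ q ∪ r := hHN.1.elim (mem_union_left _ ·.1) (mem_union_right _ ·.1)
    have huJ : u ∈ J := hcomp H hH ▸
      mem_sup.mpr ⟨H, mem_filter.mpr ⟨hH, .refl⟩, (mem_inter.mp hu).1⟩
    have hhub : ∀ S ∈ q ∪ r, conn q r S H := by
      intro S hS
      obtain ⟨P, hP, huP⟩ := mem_sup.mp (hcomp S hS ▸ huJ)
      rw [mem_filter] at hP
      exact hP.2.trans (conn_symm_s14 (conn_of_linkRel_of_mem hHN (mem_inter.mp hu).1
        (mem_inter.mp hu).2 hP.1 huP))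
    exact fun S hS T hT => (hhub S hS).trans (conn_symm_s14 (hhub T hT))
  · have hself : ∀ S ∈ q ∪ r, S = J := by
      intro S hS
      have hfilter : (q ∪ r).filter (conn q r S) = {S} := by
        refine eq_singleton_iff_unique_mem.mpr ⟨mem_filter.mpr ⟨hS, .refl⟩, fun T hT => ?_⟩
        rcases (mem_filter.mp hT).2.cases_tail with h | ⟨N, -, hNT⟩
        exacts [h, (hlink ⟨N, T, hNT⟩).elim]
      simpa [hfilter] using hcomp S hS
    intro S hS T hT
    rw [hself S hS, hself T hT]
    exact .refl

lemma consistent_of_forall_conn {H : Finset α} (hH : H ∈ q ∪ r)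
    (h : ∀ S ∈ q ∪ r, conn q r S H) : consistent q r := by
  have hcomp : ∀ S ∈ q ∪ r, ((q ∪ r).filter (conn q r S)).sup id = (q ∪ r).sup id :=
    fun S hS => congrArg (·.sup id)
      (filter_true_of_mem fun T hT => (h S hS).trans (conn_symm_s14 (h T hT)))
  refine card_eq_one.mpr ⟨(q ∪ r).sup id, eq_singleton_iff_unique_mem.mpr ⟨?_, ?_⟩⟩
  · exact hcomp H hH ▸ mem_image_of_mem _ hH
  · simp only [pjoin, mem_image]
    rintro _ ⟨S, hS, rfl⟩
    exact hcomp S hS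

lemma exists_meet_of_conn (hR : R ∈ r) (hRne : R.Nonempty) (hWM : W ⊆ M)
    (h : conn p r R W) : ∃ T ∈ r, (T ∩ M).Nonempty ∧ conn p r R T := by
  rcases h.cases_tail with rfl | ⟨N, hRN, hNW⟩
  · exact ⟨W, hR, by rwa [inter_eq_left.mpr hWM], .refl⟩
  · rcases hNW.1 with ⟨-, hWr⟩ | ⟨hNr, -⟩
    · exact ⟨W, hWr, hNW.2.mono (subset_inter inter_subset_right (inter_subset_right.trans hWM)),
        hRN.tail hNW⟩
    · exact ⟨N, hNr, hNW.2.mono (inter_subset_inter_left hWM), hRN⟩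

/-- Cut the path where it first uses a set of `q` outside `p`: that set lies in `M`, and the
set of `r` just before or after it meets `M`. -/
lemma conn_or_exists_meet_of_conn (hq : ExtendsWithin p q M) (hS : S ∈ p ∪ r)
    (h : conn q r S W) : conn p r S W ∨ ∃ T ∈ r, (T ∩ M).Nonempty ∧ conn p r S T := by
  induction h with
  | refl => exact Or.inl .refl
  | @tail N W _ hNW ih =>
    rcases ih with hSN | hexit
    · rcases hNW.1 with ⟨hNq, hWr⟩ | ⟨hNr, hWq⟩
      · by_cases hNp : N ∈ p
        · exact Or.inl (hSN.tail ⟨Or.inl ⟨hNp, hWr⟩, hNW.2⟩)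
        have hNM : N ⊆ M := (hq N hNq).resolve_left hNp
        have hNr : N ∈ r := (mem_union.mp (mem_union_of_conn hSN hS)).resolve_left hNp
        exact Or.inr ⟨N, hNr, hNW.2.mono (subset_inter inter_subset_left
          (inter_subset_left.trans hNM)), hSN⟩
      · by_cases hWp : W ∈ p
        · exact Or.inl (hSN.tail ⟨Or.inr ⟨hNr, hWp⟩, hNW.2⟩)
        exact Or.inr ⟨N, hNr,
          hNW.2.mono (inter_subset_inter_left ((hq W hWq).resolve_left hWp)), hSN⟩
    · exact Or.inr hexit

lemma exists_meet_of_conn_of_extendsWithin (hq : ExtendsWithin p q M) (hR : R ∈ r)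
    (hRne : R.Nonempty) (hWM : W ⊆ M) (h : conn q r R W) :
    ∃ T ∈ r, (T ∩ M).Nonempty ∧ conn p r R T :=
  (conn_or_exists_meet_of_conn hq (mem_union_right _ hR) h).elim
    (exists_meet_of_conn hR hRne hWM) id

lemma exists_bridge {A B : Finset α} (hR : R ∈ r) (hRne : R.Nonempty)
    (hA : conn (insert A (insert B p)) r R A) (hB : conn (insert A (insert B p)) r R B) :
    ∃ T ∈ r, ∃ T' ∈ r, (T ∩ A).Nonempty ∧ (T' ∩ B).Nonempty ∧ conn p r T T' := by
  obtain ⟨T₀, hT₀, hT₀B, hRT₀⟩ := exists_meet_of_conn hR hRne subset_rfl hB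
  obtain ⟨T, hT, hTA, hT₀T⟩ := exists_meet_of_conn_of_extendsWithin
    (extendsWithin_insert subset_rfl) hT₀ (hT₀B.mono inter_subset_left) subset_rfl
    ((conn_symm_s14 hRT₀).trans hA)
  rcases conn_or_exists_meet_of_conn (extendsWithin_insert subset_rfl) (mem_union_right _ hT)
    (conn_symm_s14 hT₀T) with hTT₀ | ⟨T', hT', hT'B, hTT'⟩
  · exact ⟨T, hT, T₀, hT₀, hTA, hT₀B, hTT₀⟩
  · exact ⟨T, hT, T', hT', hTA, hT'B, hTT'⟩

lemma consistent_insert_insert_of_bridge {A B T T' : Finset α} (hpq : p ⊆ q)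
    (hq : ExtendsWithin p q M) (hcons : consistent q r) (hM : M ⊆ A ∪ B) (hT : T ∈ r)
    (hT' : T' ∈ r) (hTA : (T ∩ A).Nonempty) (hT'B : (T' ∩ B).Nonempty) (hTT' : conn p r T T') :
    consistent (insert B (insert A p)) r := by
  set q' := insert B (insert A p)
  have hBq' : B ∈ q' := mem_insert_self _ _
  have hAq' : A ∈ q' := mem_insert_of_mem (mem_insert_self _ _)
  have hpq' : p ⊆ q' := (subset_insert _ _).trans (subset_insert _ _)
  have hTA' : conn q' r T A := conn_symm_s14 (conn_of_mem_of_mem hAq' hT (inter_comm T A ▸ hTA))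
  have hBA : conn q' r B A := (conn_of_mem_of_mem hBq' hT' (inter_comm T' B ▸ hT'B)).trans
    ((conn_symm_s14 (conn_mono hpq' hTT')).trans hTA')
  have hmeet : ∀ S ∈ r, (S ∩ M).Nonempty → conn q' r S A := by
    rintro S hS ⟨u, hu⟩
    rw [mem_inter] at hu
    rcases mem_union.mp (hM hu.2) with huA | huB
    · exact conn_symm_s14 (conn_of_mem_of_mem hAq' hS ⟨u, mem_inter.mpr ⟨huA, hu.1⟩⟩)
    · exact (conn_symm_s14 (conn_of_mem_of_mem hBq' hS ⟨u, mem_inter.mpr ⟨huB, hu.1⟩⟩)).trans hBA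
  have hpr : ∀ S ∈ p ∪ r, conn q' r S A := by
    intro S hS
    have hSq : S ∈ q ∪ r := union_subset_union hpq subset_rfl hS
    rcases conn_or_exists_meet_of_conn hq hS
        (conn_of_consistent_s14 hcons S hSq T (mem_union_right _ hT)) with hST | ⟨N, hN, hNM, hSN⟩
    · exact (conn_mono hpq' hST).trans hTA'
    · exact (conn_mono hpq' hSN).trans (hmeet N hN hNM)
  refine consistent_of_forall_conn (mem_union_left _ hAq') fun S hS => ?_
  rcases mem_union.mp hS with hSq' | hSr
  · rcases mem_insert.mp hSq' with rfl | hS'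
    · exact hBA
    rcases mem_insert.mp hS' with rfl | hSp
    · exact .refl
    · exact hpr S (mem_union_left _ hSp)
  · exact hpr S (mem_union_right _ hSr)

end Connectivity

theorem joint_domination_general (z : α) (U : Finset α) (p : Finset (Finset α))
    (X Y Z : Finset α) :
    ∀ r : Finset (Finset α), IsPattern z U r →
      consistent (insert (X ∪ Y) (insert Z p)) r →
      consistent (insert (Y ∪ Z) (insert X p)) r ∨
      consistent (insert (X ∪ Z) (insert Y p)) r := by
  intro r hr hcons
  obtain ⟨R, ⟨hR, hzR⟩, -⟩ := hr.2
  have hconn := conn_of_consistent_s14 hcons R (mem_union_right _ hR)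
  obtain ⟨T, hT, T', hT', hTXY, hT'Z, hTT'⟩ := exists_bridge hR ⟨z, hzR⟩
    (hconn _ (mem_union_left _ (mem_insert_self _ _)))
    (hconn _ (mem_union_left _ (mem_insert_of_mem (mem_insert_self _ _))))
  have hpq : p ⊆ insert (X ∪ Y) (insert Z p) := (subset_insert _ _).trans (subset_insert _ _)
  have hq : ExtendsWithin p (insert (X ∪ Y) (insert Z p)) (X ∪ Y ∪ Z) :=
    (extendsWithin_insert subset_union_right).insert subset_union_left
  rw [inter_union_distrib_left, union_nonempty] at hTXY
  rcases hTXY with hTX | hTY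
  · exact Or.inl (consistent_insert_insert_of_bridge hpq hq hcons (union_assoc X Y Z).subset
      hT hT' hTX (hT'Z.mono (inter_subset_inter_left subset_union_right)) hTT')
  · refine Or.inr (consistent_insert_insert_of_bridge hpq hq hcons ?_
      hT hT' hTY (hT'Z.mono (inter_subset_inter_left subset_union_right)) hTT')
    rw [union_left_comm, ← union_assoc]

/-- Joint domination: `{p₁, p₂}` jointly dominates `p₀`. -/
theorem joint_domination (z : α) (U : Finset α) (p : Finset (Finset α))
    (hp : IsPattern z U p) (hc : Complete z p)
    (X Y Z : Finset α) (hX : X ⊆ U) (hY : Y ⊆ U) (hZ : Z ⊆ U)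
    (hns : ∀ S ∈ p, ∀ u ∈ S, u ∈ X ∪ Y ∪ Z → S = {u}) :
    ∀ r : Finset (Finset α), IsPattern z U r →
      consistent (insert (X ∪ Y) (insert Z p)) r →
      consistent (insert (Y ∪ Z) (insert X p)) r ∨
      consistent (insert (X ∪ Z) (insert Y p)) r :=
  joint_domination_general z U p X Y Z

end PatternST
end
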